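/- arXiv:2201.01117 — 8 statements merged into one kernel-verified Lean document; each statement's English description precedes it below -/
import Mathlib

section
/- For every K ≥ 1, there exist K consecutive positive integers none of which is representable as m² + mn + n² with integers m, n. Consequently, the set of integers of the form m² + mn + n² has arbitrarily large gaps. -/
lemma zmod_eisenstein_zero {p : ℕ} (hp : p.Prime) (h2 : p % 3 = 2) (m n : ZMod p)
    (h : m ^ 2 + m * n + n ^ 2 = 0) : n = 0 := by
  haveI : Fact p.Prime := ⟨hp⟩
  by_contra hn
  set t := m / n with ht'
  have htn : t * n = m := div_mul_cancel₀ m hn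
  have ht : t ^ 2 + t + 1 = 0 := by
    have key : (t ^ 2 + t + 1) * n ^ 2 = 0 := by
      linear_combination (t * n + m + n) * htn + h
    rcases mul_eq_zero.mp key with h' | h'
    · exact h'
    · exact absurd ((pow_eq_zero_iff (two_ne_zero)).mp h') hn
  have ht3 : t ^ 3 = 1 := by linear_combination (t - 1) * ht
  have htne : t ≠ 0 := by
    intro h0
    rw [h0] at ht3
    simp at ht3
  have hd1 : orderOf t ∣ 3 := orderOf_dvd_of_pow_eq_one ht3
  have hd2 : orderOf t ∣ p - 1 :=
    orderOf_dvd_of_pow_eq_one (ZMod.pow_card_sub_one_eq_one htne)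
  have hnd : ¬ (3 ∣ p - 1) := by
    have := hp.two_le
    omega
  have ho1 : orderOf t = 1 := by
    rcases (Nat.prime_three.eq_one_or_self_of_dvd _ hd1) with h' | h'
    · exact h'
    · exact absurd (h' ▸ hd2) hnd
  have t1 : t = 1 := orderOf_eq_one_iff.mp ho1
  rw [t1] at ht
  have h3 : ((3 : ℕ) : ZMod p) = 0 := by push_cast; linear_combination ht
  have hpd : p ∣ 3 := (ZMod.natCast_eq_zero_iff 3 p).mp h3
  have := (Nat.prime_dvd_prime_iff_eq hp Nat.prime_three).mp hpd
  omega

lemma int_eisenstein_dvd {p : ℕ} (hp : p.Prime) (h2 : p % 3 = 2) (m n : ℤ)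
    (h : (p : ℤ) ∣ m ^ 2 + m * n + n ^ 2) : (p : ℤ) ∣ m ∧ (p : ℤ) ∣ n := by
  haveI : Fact p.Prime := ⟨hp⟩
  have hz : (m : ZMod p) ^ 2 + (m : ZMod p) * (n : ZMod p) + (n : ZMod p) ^ 2 = 0 := by
    have := (ZMod.intCast_zmod_eq_zero_iff_dvd (m ^ 2 + m * n + n ^ 2) p).mpr h
    push_cast at this
    exact this
  have hn0 : (n : ZMod p) = 0 := zmod_eisenstein_zero hp h2 _ _ hz
  have hm0 : (m : ZMod p) = 0 := by
    have hsq : (m : ZMod p) ^ 2 = 0 := by linear_combination hz - ((m : ZMod p) + n) * hn0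
    exact (pow_eq_zero_iff two_ne_zero).mp hsq
  exact ⟨(ZMod.intCast_zmod_eq_zero_iff_dvd m p).mp hm0,
    (ZMod.intCast_zmod_eq_zero_iff_dvd n p).mp hn0⟩

theorem arbitrarily_large_gaps_eisenstein_form (K : ℕ) (hK : 1 ≤ K) :
    ∃ a : ℕ, 0 < a ∧ ∀ j : ℕ, j < K →
      ¬ ∃ m n : ℤ, ((a + j : ℕ) : ℤ) = m ^ 2 + m * n + n ^ 2 := by
  have hinf : {q : ℕ | q.Prime ∧ (q : ZMod 3) = (2 : ZMod 3)}.Infinite :=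
    Nat.infinite_setOf_prime_and_eq_mod (by decide)
  let e := hinf.natEmbedding
  set p : ℕ → ℕ := fun j => (e j : ℕ) with hp_def
  have hprime : ∀ j, (p j).Prime := fun j => (e j).2.1
  have hmod : ∀ j, p j % 3 = 2 := by
    intro j
    have h1 : ((p j : ℕ) : ZMod 3) = 2 := (e j).2.2
    have := ZMod.val_natCast (n := 3) (p j)
    rw [h1] at this
    exact this.symm
  have hinj : ∀ i j, i ≠ j → p i ≠ p j := by
    intro i j hij hpe
    exact hij (e.injective (Subtype.ext hpe))
  set s : ℕ → ℕ := fun j => p j ^ 2 with hs_def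
  set r : ℕ → ℕ := fun j => p j + p j ^ 2 * (j + 1) - j with hr_def
  have hp2 : ∀ j, 2 ≤ p j := fun j => (hprime j).two_le
  have hrj : ∀ j, r j + j = p j + p j ^ 2 * (j + 1) := by
    intro j
    have hx : j + 1 ≤ p j ^ 2 * (j + 1) := Nat.le_mul_of_pos_left _ (pow_pos (by have := hp2 j; omega) 2)
    simp only [hr_def]
    omega
  have co : (List.range K).Pairwise (Function.onFun Nat.Coprime s) := by
    refine (List.pairwise_lt_range (n := K)).imp ?_
    intro i j hij
    show Nat.Coprime (p i ^ 2) (p j ^ 2)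
    exact Nat.Coprime.pow 2 2 ((Nat.coprime_primes (hprime i) (hprime j)).mpr (hinj i j hij.ne))
  obtain ⟨a, ha⟩ := Nat.chineseRemainderOfList r s (List.range K) co
  have key : ∀ j, j < K → (a + j) % (p j ^ 2) = p j := by
    intro j hj
    have h1 : a ≡ r j [MOD s j] := ha j (List.mem_range.mpr hj)
    have h2 : a + j ≡ r j + j [MOD s j] := h1.add_right j
    have h3 : a + j ≡ p j [MOD p j ^ 2] := by
      calc a + j ≡ r j + j [MOD p j ^ 2] := h2
        _ = p j + p j ^ 2 * (j + 1) := hrj j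
        _ ≡ p j [MOD p j ^ 2] := by
            exact ((Nat.modEq_iff_dvd' (Nat.le_add_right _ _)).mpr
              ⟨j + 1, by rw [Nat.add_sub_cancel_left]⟩).symm
    have hlt : p j < p j ^ 2 := by nlinarith [hp2 j]
    calc (a + j) % (p j ^ 2) = p j % (p j ^ 2) := h3
      _ = p j := Nat.mod_eq_of_lt hlt
  have hdvd : ∀ j, j < K → p j ∣ a + j := by
    intro j hj
    have h1 := key j hj
    have h2 := Nat.div_add_mod (a + j) (p j ^ 2)
    rw [h1] at h2
    exact ⟨p j * ((a + j) / p j ^ 2) + 1, by nlinarith⟩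
  have hnsq : ∀ j, j < K → ¬ (p j ^ 2 ∣ a + j) := by
    intro j hj hdvd2
    have h1 := key j hj
    have h0 : (a + j) % p j ^ 2 = 0 := Nat.mod_eq_zero_of_dvd hdvd2
    exact (hprime j).ne_zero (by omega)
  have hapos : 0 < a := by
    rcases Nat.eq_zero_or_pos a with h0 | h
    · exfalso
      have h1 := key 0 hK
      rw [h0, Nat.add_zero, Nat.zero_mod] at h1
      exact (hprime 0).ne_zero h1.symm
    · exact h
  refine ⟨a, hapos, ?_⟩
  rintro j hj ⟨m, n, hmn⟩
  have hpd : ((p j : ℤ)) ∣ m ^ 2 + m * n + n ^ 2 := by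
    rw [← hmn]
    exact_mod_cast Int.natCast_dvd_natCast.mpr (hdvd j hj)
  obtain ⟨hdm, hdn⟩ := int_eisenstein_dvd (hprime j) (hmod j) m n hpd
  obtain ⟨m', hm'⟩ := hdm
  obtain ⟨n', hn'⟩ := hdn
  have hsqd : ((p j : ℤ)) ^ 2 ∣ ((a + j : ℕ) : ℤ) := by
    rw [hmn, hm', hn']
    exact ⟨m' ^ 2 + m' * n' + n' ^ 2, by ring⟩
  have : p j ^ 2 ∣ a + j := by
    have := Int.natCast_dvd_natCast.mp (by exact_mod_cast hsqd)
    simpa using this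
  exact hnsq j hj this
end

section
/- For 0 < x < 1/√3, we have 1/x² + 1/((√(1 − 3(x/2)²) − x/2)²) + 1/((√(1 − 3(x/2)²) + x/2)²) = 1/(x²(1−x²)²). -/
theorem f_from_ellipse (x : ℝ) (hx0 : 0 < x) (hx1 : x < 1 / Real.sqrt 3) :
    1 / x ^ 2 + 1 / (Real.sqrt (1 - 3 * (x / 2) ^ 2) - x / 2) ^ 2
      + 1 / (Real.sqrt (1 - 3 * (x / 2) ^ 2) + x / 2) ^ 2
      = 1 / (x ^ 2 * (1 - x ^ 2) ^ 2) := by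
  have h3 : (0:ℝ) < Real.sqrt 3 := Real.sqrt_pos.mpr (by norm_num)
  have hx2 : x ^ 2 < 1 / 3 := by
    have hs3 : Real.sqrt 3 ^ 2 = 3 := Real.sq_sqrt (by norm_num)
    have h := pow_lt_pow_left₀ hx1 hx0.le (by norm_num : (2:ℕ) ≠ 0)
    rw [div_pow, hs3, one_pow] at h
    exact h
  set s := Real.sqrt (1 - 3 * (x / 2) ^ 2) with hs
  have hnn : (0:ℝ) ≤ 1 - 3 * (x / 2) ^ 2 := by nlinarith
  have hs2 : s ^ 2 = 1 - 3 * (x / 2) ^ 2 := Real.sq_sqrt hnn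
  have hsnn : 0 ≤ s := Real.sqrt_nonneg _
  have hsm : 0 < s - x / 2 := by nlinarith [hs2, hsnn]
  have hsp : 0 < s + x / 2 := by positivity
  have h1x : (0:ℝ) < 1 - x ^ 2 := by nlinarith
  have hA : (s - x / 2) ^ 2 = 1 - x ^ 2 / 2 - s * x := by nlinarith [hs2]
  have hB : (s + x / 2) ^ 2 = 1 - x ^ 2 / 2 + s * x := by nlinarith [hs2]
  rw [hA, hB]
  have hAne : (1 - x ^ 2 / 2 - s * x) ≠ 0 := by rw [← hA]; positivity
  have hBne : (1 - x ^ 2 / 2 + s * x) ≠ 0 := by rw [← hB]; positivity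
  have hxne : x ≠ 0 := ne_of_gt hx0
  have h1ne : (1 - x ^ 2) ≠ 0 := ne_of_gt h1x
  have hA2 : (2 - x ^ 2 - 2 * (s * x)) ≠ 0 := by intro h; apply hAne; linarith
  have hB2 : (2 - x ^ 2 + s * x * 2) ≠ 0 := by intro h; apply hBne; linarith
  have hA3 : (2 - x ^ 2 - x * 2 * s) ≠ 0 := by intro h; apply hAne; linarith
  have hB3 : (2 - x ^ 2 + x * 2 * s) ≠ 0 := by intro h; apply hBne; linarith
  field_simp
  linear_combination (4 * x ^ 2 - 4 * x ^ 2 * (1 - x ^ 2) ^ 2) * hs2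
end

section
/- Let (m,n) and (m',n') be pairs of positive integers with 1 ≤ m < m' ≤ n' < n and m² + mn + n² = m'² + m'n' + n'². Define F(a,b) = 1/a² + 1/b² + 1/(a+b)². Then F(m,n) > F(m',n'). -/
lemma F_aux (x y : ℝ) (hx : 0 < x) (hy : 0 < y) :
    1/x^2 + 1/y^2 + 1/(x+y)^2
      = (x^2+x*y+y^2 - x*y)/(x*y)^2 + 1/(x^2+x*y+y^2 + x*y) := by
  have hx0 : x ≠ 0 := hx.ne'
  have hy0 : y ≠ 0 := hy.ne'
  have hs : x^2+x*y+y^2 + x*y ≠ 0 := by positivity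
  rw [show (x+y)^2 = x^2+x*y+y^2 + x*y by ring]
  field_simp
  ring

theorem F_strict_monotone (m n m' n' : ℕ)
    (h1 : 1 ≤ m) (h2 : m < m') (h3 : m' ≤ n') (h4 : n' < n)
    (heq : m ^ 2 + m * n + n ^ 2 = m' ^ 2 + m' * n' + n' ^ 2) :
    1 / (m : ℝ) ^ 2 + 1 / (n : ℝ) ^ 2 + 1 / ((m : ℝ) + n) ^ 2
      > 1 / (m' : ℝ) ^ 2 + 1 / (n' : ℝ) ^ 2 + 1 / ((m' : ℝ) + n') ^ 2 := by
  have hm : (1:ℝ) ≤ (m:ℝ) := by exact_mod_cast h1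
  have hmm : (m:ℝ) < (m':ℝ) := by exact_mod_cast h2
  have hmn : (m':ℝ) ≤ (n':ℝ) := by exact_mod_cast h3
  have hnn : (n':ℝ) < (n:ℝ) := by exact_mod_cast h4
  have hE : (m:ℝ)^2 + (m:ℝ)*(n:ℝ) + (n:ℝ)^2
      = (m':ℝ)^2 + (m':ℝ)*(n':ℝ) + (n':ℝ)^2 := by exact_mod_cast heq
  set a := (m:ℝ) with ha_def
  set b := (n:ℝ) with hb_def
  set a' := (m':ℝ) with ha'_def
  set b' := (n':ℝ) with hb'_def
  have ha : 0 < a := lt_of_lt_of_le one_pos hm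
  have ha' : 0 < a' := ha.trans hmm
  have hb' : 0 < b' := lt_of_lt_of_le ha' hmn
  have hb : 0 < b := hb'.trans hnn
  -- key product inequality
  have hp : a*b < a'*b' := by
    nlinarith [mul_pos (show (0:ℝ) < (b-a)-(b'-a') by linarith)
      (show (0:ℝ) < (b-a)+(b'-a') by linarith)]
  have h3q : 3*(a'*b') ≤ a^2+a*b+b^2 := by nlinarith [sq_nonneg (a'-b')]
  -- monotonicity of (R2 - p)/p^2
  have key1 : (a^2+a*b+b^2 - a'*b')/(a'*b')^2 < (a^2+a*b+b^2 - a*b)/(a*b)^2 := by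
    rw [div_lt_div_iff₀ (by positivity) (by positivity)]
    nlinarith [mul_pos (sub_pos.mpr hp)
      (show (0:ℝ) < (a^2+a*b+b^2)*(a*b+a'*b') - (a*b)*(a'*b') by
        nlinarith [mul_le_mul_of_nonneg_right h3q
            (le_of_lt (add_pos (mul_pos ha hb) (mul_pos ha' hb'))),
          mul_pos (mul_pos ha hb) (mul_pos ha' hb'),
          mul_pos (mul_pos ha' hb') (mul_pos ha' hb')])]
  -- monotonicity of 1/(R2+p)
  have key2 : 1/(a^2+a*b+b^2 + a'*b') < 1/(a^2+a*b+b^2 + a*b) := by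
    apply one_div_lt_one_div_of_lt (by positivity)
    linarith
  rw [F_aux a b ha hb, F_aux a' b' ha' hb', ← hE]
  exact add_lt_add key1 key2
end

section
/- Let (m,n) and (m',n') be pairs of positive integers with 1 ≤ m < m' ≤ n' < n and m² + mn + n² = m'² + m'n' + n'² = R². Define F(a,b) = 1/a² + 1/b² + 1/(a+b)². Then there exists an absolute constant c > 0 such that F(m,n) − F(m',n') ≥ c/m⁴ for all sufficiently large R. -/
lemma h_diff (R2 a b : ℝ) (ha : 0 < a) (hab : a ≤ b) (hb : 3*b ≤ R2) :
    (R2/a^2 - 1/a + 1/(R2+a)) - (R2/b^2 - 1/b + 1/(R2+b))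
      ≥ (b-a)*(R2-a)/(a^2*b) := by
  have hb0 : 0 < b := lt_of_lt_of_le ha hab
  have hR2 : 0 < R2 := by linarith
  have hRa : 0 < R2 + a := by linarith
  have hRb : 0 < R2 + b := by linarith
  have e : (R2/a^2 - 1/a + 1/(R2+a)) - (R2/b^2 - 1/b + 1/(R2+b)) - (b-a)*(R2-a)/(a^2*b)
      = (b-a)*R2/(a*b^2) + (b-a)/((R2+a)*(R2+b)) := by
    field_simp
    ring
  have hba : (0:ℝ) ≤ b - a := by linarith
  have t1 : (0:ℝ) ≤ (b-a)*R2/(a*b^2) :=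
    div_nonneg (mul_nonneg hba hR2.le) (by positivity)
  have t2 : (0:ℝ) ≤ (b-a)/((R2+a)*(R2+b)) :=
    div_nonneg hba (by positivity)
  linarith

lemma p_lt_p' (R m n m' n' : ℤ) (hm : 1 ≤ m) (h12 : m < m') (h23 : m' ≤ n') (h34 : n' < n)
    (h1 : m^2 + m*n + n^2 = R^2) (h2 : m'^2 + m'*n' + n'^2 = R^2) :
    m*n < m'*n' := by
  by_contra hc
  push_neg at hc
  have hs2 : (m'+n')^2 ≤ (m+n)^2 := by nlinarith
  have hs : m'+n' ≤ m+n := by nlinarith [sq_nonneg (m+n+m'+n')]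
  nlinarith [mul_nonneg (by linarith : (0:ℤ) ≤ (m+n) - (m'+n')) (by linarith : (0:ℤ) ≤ m+m'),
    mul_nonneg (by linarith : (0:ℤ) ≤ (m+n) - (m'+n')) (by linarith : (0:ℤ) ≤ n'),
    mul_le_mul_of_nonneg_left (by linarith : m'+1 ≤ n) (by linarith : (0:ℤ) ≤ n - n')]

lemma final_bound (m n R : ℝ) (hm : 1 ≤ m) (hR : 1 ≤ R) (hn : 0 < n) (hnR : n ≤ R)
    (h3p : 3*(m*n) ≤ R^2) :
    (4/9)/m^4 ≤ (m*n + 2*R - m*n)*(R^2 - m*n)/((m*n)^2*(m*n + 2*R)) := by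
  have hm0 : (0:ℝ) < m := by linarith
  have ha0 : (0:ℝ) < m*n := by positivity
  rw [div_le_div_iff₀ (by positivity) (by positivity)]
  have haR : m*n ≤ m*R := mul_le_mul_of_nonneg_left hnR (by positivity)
  have hRmR : R ≤ m*R := by nlinarith
  have s3 : (m*n)^2*(m*n+2*R) ≤ (m*R)^2*(3*(m*R)) := by
    apply mul_le_mul (pow_le_pow_left₀ (by positivity) haR 2) (by linarith) (by linarith) (by positivity)
  have hB : m^3*R^3 ≤ m^4*R^3 :=
    mul_le_mul_of_nonneg_right (pow_le_pow_right₀ hm (by norm_num)) (by positivity)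
  have hC : (4/3)*R^2 ≤ 2*(R^2 - m*n) := by linarith
  nlinarith [s3, mul_le_mul_of_nonneg_right hC (by positivity : (0:ℝ) ≤ R*m^4)]

theorem F_gap_lower_bound :
    ∃ c > (0 : ℝ), ∃ R₀ : ℕ, ∀ R m n m' n' : ℕ, R₀ ≤ R →
      1 ≤ m → m < m' → m' ≤ n' → n' < n →
      m ^ 2 + m * n + n ^ 2 = R ^ 2 →
      m' ^ 2 + m' * n' + n' ^ 2 = R ^ 2 →
      (1 / (m : ℝ) ^ 2 + 1 / (n : ℝ) ^ 2 + 1 / ((m : ℝ) + n) ^ 2)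
        - (1 / (m' : ℝ) ^ 2 + 1 / (n' : ℝ) ^ 2 + 1 / ((m' : ℝ) + n') ^ 2)
        ≥ c / (m : ℝ) ^ 4 := by
  refine ⟨4/9, by norm_num, 1, ?_⟩
  intro R m n m' n' hR hm h12 h23 h34 h1 h2
  -- integer facts
  have h1z : (m:ℤ)^2 + m*n + n^2 = (R:ℤ)^2 := by exact_mod_cast h1
  have h2z : (m':ℤ)^2 + m'*n' + n'^2 = (R:ℤ)^2 := by exact_mod_cast h2
  have hmz : 1 ≤ (m:ℤ) := by exact_mod_cast hm
  have h12z : (m:ℤ) < m' := by exact_mod_cast h12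
  have h23z : (m':ℤ) ≤ n' := by exact_mod_cast h23
  have h34z : (n':ℤ) < n := by exact_mod_cast h34
  have hRz : 1 ≤ (R:ℤ) := by exact_mod_cast hR
  have hpz : (m:ℤ)*n < m'*n' := p_lt_p' R m n m' n' hmz h12z h23z h34z h1z h2z
  have hnz : (m:ℤ) + 2 ≤ n := by linarith
  have hmn1 : (1:ℤ)*1 ≤ (m:ℤ)*n := mul_le_mul hmz (by linarith) (by norm_num) (by linarith)
  -- n < R
  have hnR : (n:ℤ) < R := by
    by_contra hc
    push_neg at hc
    have h' : (R:ℤ)^2 ≤ (n:ℤ)^2 := pow_le_pow_left₀ (by linarith) hc 2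
    nlinarith [sq_nonneg (m:ℤ)]
  -- m+n ≥ R+1
  have hsR : (R:ℤ) + 1 ≤ m + n := by
    by_contra hc
    push_neg at hc
    have h' : ((m:ℤ)+n)^2 ≤ (R:ℤ)^2 := pow_le_pow_left₀ (by linarith) (by linarith) 2
    linarith [h1z]
  have e1z : ((m:ℤ)+n)^2 = (R:ℤ)^2 + m*n := by linear_combination h1z
  have e2z : ((m':ℤ)+n')^2 = (R:ℤ)^2 + m'*n' := by linear_combination h2z
  -- m'+n' ≥ m+n+1
  have hss : (m:ℤ) + n + 1 ≤ m' + n' := by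
    by_contra hc
    push_neg at hc
    have h' : ((m':ℤ)+n')^2 ≤ ((m:ℤ)+n)^2 :=
      pow_le_pow_left₀ (by linarith) (by linarith) 2
    linarith
  -- p + 2R ≤ p'
  have hqz : (m:ℤ)*n + 2*R ≤ m'*n' := by
    have h' : ((m:ℤ)+n+1)^2 ≤ ((m':ℤ)+n')^2 :=
      pow_le_pow_left₀ (by linarith) hss 2
    have exp : ((m:ℤ)+n+1)^2 = ((m:ℤ)+n)^2 + 2*((m:ℤ)+n) + 1 := by ring
    linarith [e1z, e2z]
  have h3p : 3*((m:ℤ)*n) ≤ (R:ℤ)^2 := by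
    have sq1 : (0:ℤ) ≤ ((m:ℤ)-n)^2 := sq_nonneg _
    have sq1' : ((m:ℤ)-n)^2 = m^2 - 2*(m*n) + n^2 := by ring
    linarith [h1z]
  have h3p' : 3*((m':ℤ)*n') ≤ (R:ℤ)^2 := by
    have sq1 : (0:ℤ) ≤ ((m':ℤ)-n')^2 := sq_nonneg _
    have sq1' : ((m':ℤ)-n')^2 = m'^2 - 2*(m'*n') + n'^2 := by ring
    linarith [h2z]
  -- real facts
  have hm0 : (0:ℝ) < m := by exact_mod_cast hm
  have hn0 : (0:ℝ) < n := by exact_mod_cast (by omega : 0 < n)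
  have hm'0 : (0:ℝ) < m' := by exact_mod_cast (by omega : 0 < m')
  have hn'0 : (0:ℝ) < n' := by exact_mod_cast (by omega : 0 < n')
  have hm1r : (1:ℝ) ≤ m := by exact_mod_cast hm
  have hRr : (1:ℝ) ≤ R := by exact_mod_cast hR
  have h1r : (m:ℝ)^2 + m*n + n^2 = (R:ℝ)^2 := by exact_mod_cast h1
  have h2r : (m':ℝ)^2 + m'*n' + n'^2 = (R:ℝ)^2 := by exact_mod_cast h2
  have hnRr : (n:ℝ) ≤ R := by exact_mod_cast hnR.le
  have h3pr : 3*((m:ℝ)*n) ≤ (R:ℝ)^2 := by exact_mod_cast h3p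
  have h3p'r : 3*((m':ℝ)*n') ≤ (R:ℝ)^2 := by exact_mod_cast h3p'
  have hqr : (m:ℝ)*n + 2*R ≤ (m':ℝ)*n' := by exact_mod_cast hqz
  have ha0 : (0:ℝ) < (m:ℝ)*n := by positivity
  have hq0 : (0:ℝ) < (m:ℝ)*n + 2*R := by linarith
  have e1 : 1 / (m : ℝ) ^ 2 + 1 / (n : ℝ) ^ 2 + 1 / ((m : ℝ) + n) ^ 2
      = (R:ℝ)^2/((m:ℝ)*n)^2 - 1/((m:ℝ)*n) + 1/((R:ℝ)^2+(m:ℝ)*n) := by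
    rw [← h1r]
    have hmn0 : (0:ℝ) < (m:ℝ) + n := by linarith
    field_simp
    ring
  have e2 : 1 / (m' : ℝ) ^ 2 + 1 / (n' : ℝ) ^ 2 + 1 / ((m' : ℝ) + n') ^ 2
      = (R:ℝ)^2/((m':ℝ)*n')^2 - 1/((m':ℝ)*n') + 1/((R:ℝ)^2+(m':ℝ)*n') := by
    rw [← h2r]
    have hmn0 : (0:ℝ) < (m':ℝ) + n' := by linarith
    field_simp
    ring
  have key1 := h_diff ((R:ℝ)^2) ((m:ℝ)*n) ((m:ℝ)*n + 2*(R:ℝ)) ha0 (by linarith) (by linarith)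
  have key2 := h_diff ((R:ℝ)^2) ((m:ℝ)*n + 2*(R:ℝ)) ((m':ℝ)*n') hq0 hqr h3p'r
  have key2' : (0:ℝ) ≤ ((m':ℝ)*n' - ((m:ℝ)*n + 2*(R:ℝ)))*((R:ℝ)^2 - ((m:ℝ)*n + 2*(R:ℝ)))
      / (((m:ℝ)*n + 2*(R:ℝ))^2*((m':ℝ)*n')) := by
    apply div_nonneg (mul_nonneg (by linarith) (by linarith)) (by positivity)
  have final := final_bound (m:ℝ) (n:ℝ) (R:ℝ) hm1r hRr hn0 hnRr h3pr
  rw [e1, e2]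
  linarith [key1, key2, key2', final]
end

section
/- Let R, m', n' be positive integers with m' < n' and m'² + m'n' + n'² = R². Then m'/R ≤ 1/√3 − 1/(2R). -/
theorem x_prime_bound (R m' n' : ℕ) (hR : 0 < R) (hm' : 0 < m') (hlt : m' < n')
    (heq : m' ^ 2 + m' * n' + n' ^ 2 = R ^ 2) :
    (m' : ℝ) / R ≤ 1 / Real.sqrt 3 - 1 / (2 * R) := by
  have hRr : (0:ℝ) < R := by exact_mod_cast hR
  have heqR : (m':ℝ) ^ 2 + m' * n' + n' ^ 2 = (R:ℝ) ^ 2 := by exact_mod_cast heq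
  have hnR : (m':ℝ) + 1 ≤ n' := by exact_mod_cast hlt
  have h3 : 3 * (2 * (m':ℝ) + 1) ^ 2 ≤ 4 * (R:ℝ) ^ 2 := by nlinarith
  have hs : (0:ℝ) < Real.sqrt 3 := Real.sqrt_pos.mpr (by norm_num)
  have hs2 : Real.sqrt 3 ^ 2 = 3 := Real.sq_sqrt (by norm_num)
  have key : Real.sqrt 3 * (2 * (m':ℝ) + 1) ≤ 2 * R := by
    nlinarith [sq_nonneg (Real.sqrt 3 * (2 * (m':ℝ) + 1) - 2 * R), hm'.le,
      Nat.cast_nonneg (α := ℝ) m']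
  rw [div_sub_div _ _ (ne_of_gt hs) (by positivity), div_le_div_iff₀ hRr (by positivity)]
  have hm0 : (0:ℝ) ≤ (m':ℝ) := Nat.cast_nonneg m'
  nlinarith [key, hs, hRr]
end

section
/- Let M ∈ [0, π/2), L ∈ (−π/2, 0], N ∈ [0, π/2) satisfy (2M − L − N)·tan M = 3rσ for parameters r, σ > 0, and suppose |L|, N < 1/100 and M ≥ 10(|L| + N). Then M² ≤ 3rσ. -/
theorem M_sq_bound (r σ L M N : ℝ) (hr : 0 < r) (hσ : 0 < σ)
    (hM : M ∈ Set.Ico (0 : ℝ) (Real.pi / 2))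
    (hL : L ∈ Set.Ioc (-(Real.pi / 2)) (0 : ℝ))
    (hN : N ∈ Set.Ico (0 : ℝ) (Real.pi / 2))
    (heq : (2 * M - L - N) * Real.tan M = 3 * r * σ)
    (hLsmall : |L| < 1 / 100) (hNsmall : N < 1 / 100)
    (hMbig : 10 * (|L| + N) ≤ M) :
    M ^ 2 ≤ 3 * r * σ := by
  obtain ⟨hM0, hM2⟩ := hM
  have htan : M ≤ Real.tan M := Real.le_tan (by linarith) hM2
  have habsL : 0 ≤ |L| := abs_nonneg L
  have hfac : M ≤ 2 * M - L - N := by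
    have : -L ≤ |L| := neg_le_abs L
    have hN0 := hN.1; have hL2 := hL.2; linarith
  calc M ^ 2 = M * M := sq M
    _ ≤ (2 * M - L - N) * Real.tan M :=
        mul_le_mul hfac htan hM0 (by linarith)
    _ = 3 * r * σ := heq
end

section
/- Let r > 0, σ ≥ 0, integers 0 ≤ m ≤ n with n ≥ 1, and suppose L ∈ (−π/2, 0], M, N ∈ [0, π/2) satisfy the system (2L − M − N − (m+n)π)tan L = 3rσ, (2M − N − L + mπ)tan M = 3rσ, (2N − L − M + nπ)tan N = 3rσ. Then |tan L| ≤ 3rσ/((m+n)π) and |tan N| ≤ 3rσ/((n − 1/2)π); in particular |L| ≤ 3rσ/(nπ) and N ≤ 3rσ/((n−1/2)π). -/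
set_option maxHeartbeats 1000000


theorem LN_bounds (r σ : ℝ) (hr : 0 < r) (hσ : 0 ≤ σ)
    (m n : ℕ) (hmn : m ≤ n) (hn : 1 ≤ n)
    (L M N : ℝ)
    (hL : L ∈ Set.Ioc (-(Real.pi / 2)) (0 : ℝ))
    (hM : M ∈ Set.Ico (0 : ℝ) (Real.pi / 2))
    (hN : N ∈ Set.Ico (0 : ℝ) (Real.pi / 2))
    (heq1 : (2 * L - M - N - (m + n) * Real.pi) * Real.tan L = 3 * r * σ)
    (heq2 : (2 * M - N - L + m * Real.pi) * Real.tan M = 3 * r * σ)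
    (heq3 : (2 * N - L - M + n * Real.pi) * Real.tan N = 3 * r * σ) :
    |Real.tan L| ≤ 3 * r * σ / ((m + n) * Real.pi) ∧
    |Real.tan N| ≤ 3 * r * σ / (((n : ℝ) - 1 / 2) * Real.pi) ∧
    |L| ≤ 3 * r * σ / (n * Real.pi) ∧
    N ≤ 3 * r * σ / (((n : ℝ) - 1 / 2) * Real.pi) := by
  obtain ⟨hL1, hL2⟩ := hL
  obtain ⟨hM1, hM2⟩ := hM
  obtain ⟨hN1, hN2⟩ := hN
  have hpi := Real.pi_pos
  have hn1 : (1 : ℝ) ≤ (n : ℝ) := by exact_mod_cast hn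
  have hmn' : (m : ℝ) ≤ (n : ℝ) := by exact_mod_cast hmn
  have hm0 : (0 : ℝ) ≤ (m : ℝ) := Nat.cast_nonneg m
  have htanL : Real.tan L ≤ 0 :=
    Real.tan_nonpos_of_nonpos_of_neg_pi_div_two_le hL2 hL1.le
  have htanN : 0 ≤ Real.tan N :=
    Real.tan_nonneg_of_nonneg_of_le_pi_div_two hN1 hN2.le
  have hden1 : 0 < ((m : ℝ) + n) * Real.pi := by nlinarith
  have hden3 : 0 < ((n : ℝ) - 1 / 2) * Real.pi := by nlinarith
  have hdenN : 0 < (n : ℝ) * Real.pi := by nlinarith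
  have h1 : |Real.tan L| ≤ 3 * r * σ / ((m + n) * Real.pi) := by
    rw [abs_of_nonpos htanL, le_div_iff₀ hden1]
    nlinarith [mul_nonneg (by nlinarith : (0:ℝ) ≤ -(2 * L - M - N) ) (neg_nonneg.mpr htanL)]
  have h3 : |Real.tan N| ≤ 3 * r * σ / (((n : ℝ) - 1 / 2) * Real.pi) := by
    rw [abs_of_nonneg htanN, le_div_iff₀ hden3]
    have hA3 : ((n : ℝ) - 1 / 2) * Real.pi ≤ 2 * N - L - M + n * Real.pi := by nlinarith
    calc Real.tan N * (((n : ℝ) - 1 / 2) * Real.pi)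
        ≤ Real.tan N * (2 * N - L - M + n * Real.pi) :=
          mul_le_mul_of_nonneg_left hA3 htanN
      _ = 3 * r * σ := by linarith [heq3, mul_comm (Real.tan N) (2 * N - L - M + n * Real.pi)]
  have hLabs : |L| ≤ |Real.tan L| := by
    rw [abs_of_nonpos hL2, abs_of_nonpos htanL, ← Real.tan_neg]
    exact Real.le_tan (by linarith) (by linarith)
  refine ⟨h1, h3, ?_, ?_⟩
  · refine hLabs.trans (h1.trans ?_)
    have hle : (n : ℝ) * Real.pi ≤ ((m : ℝ) + n) * Real.pi := by nlinarith
    exact div_le_div_of_nonneg_left (by positivity) hdenN hle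
  · refine le_trans ?_ h3
    rw [abs_of_nonneg htanN]
    exact Real.le_tan hN1 hN2
end

section
/- Let r > 0, σ > 0 and suppose L ∈ (−π/2, 0], M ∈ [0, π/2) satisfy 2(L − M)tan L = 3rσ and (M − L)tan M = 3rσ. Then there is a constant C = C(r) with |L| ≤ C√σ and M ≤ C√σ. -/
theorem LM_sqrt_sigma_bound (r : ℝ) (hr : 0 < r) :
    ∃ C > (0 : ℝ), ∀ σ L M : ℝ, 0 < σ →
      L ∈ Set.Ioc (-(Real.pi / 2)) (0 : ℝ) →
      M ∈ Set.Ico (0 : ℝ) (Real.pi / 2) →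
      2 * (L - M) * Real.tan L = 3 * r * σ →
      (M - L) * Real.tan M = 3 * r * σ →
      |L| ≤ C * Real.sqrt σ ∧ M ≤ C * Real.sqrt σ := by
  refine ⟨Real.sqrt (3 * r), Real.sqrt_pos.mpr (by linarith), ?_⟩
  intro σ L M hσ hL hM e1 e2
  obtain ⟨hL1, hL2⟩ := hL
  obtain ⟨hM1, hM2⟩ := hM
  have htM : M ≤ Real.tan M := Real.le_tan hM1 hM2
  have htL : Real.tan L ≤ L := by
    have := Real.le_tan (x := -L) (by linarith) (by linarith)
    rw [Real.tan_neg] at this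
    linarith
  have htL0 : Real.tan L ≤ 0 := by linarith
  have hrs : 0 < 3 * r * σ := by positivity
  have hML : 0 < M - L := by
    nlinarith [mul_nonneg (neg_nonneg.mpr htL0) (neg_nonneg.mpr (show L - M ≤ 0 by nlinarith))]
  have hL2sq : L ^ 2 ≤ 3 * r * σ := by nlinarith
  have hM2sq : M ^ 2 ≤ 3 * r * σ := by nlinarith
  have hsqrt : Real.sqrt (3 * r * σ) = Real.sqrt (3 * r) * Real.sqrt σ :=
    Real.sqrt_mul (by linarith) σ
  constructor
  · calc |L| = Real.sqrt (L ^ 2) := (Real.sqrt_sq_eq_abs L).symm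
      _ ≤ Real.sqrt (3 * r * σ) := Real.sqrt_le_sqrt hL2sq
      _ = _ := hsqrt
  · calc M ≤ |M| := le_abs_self M
      _ = Real.sqrt (M ^ 2) := (Real.sqrt_sq_eq_abs M).symm
      _ ≤ Real.sqrt (3 * r * σ) := Real.sqrt_le_sqrt hM2sq
      _ = _ := hsqrt
end
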